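/- A spiral S_d(U) = { n^{1/(d+1)}·u_n : n ≥ 1 } is an orchard with visibility function ε ↦ c_U·V(κ_U·ε) for some constants c_U ≥ 1, κ_U > 0 if and only if there exist constants κ, K > 0 such that for all sufficiently small ε > 0 and all v ∈ S^d there is an integer n with 1 ≤ n ≤ K·V(ε)^{d+1} and dist_{S^d}(u_n, v) ≤ κ·ε / n^{1/(d+1)}. -/

import Mathlib

noncomputable section

def gdist {d : ℕ} (u v : EuclideanSpace ℝ (Fin (d+1))) : ℝ :=
  Real.arccos (inner ℝ u v)

def spiral {d : ℕ} (u : ℕ → EuclideanSpace ℝ (Fin (d+1))) :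
    Set (EuclideanSpace ℝ (Fin (d+1))) :=
  {x | ∃ n : ℕ, 1 ≤ n ∧ x = ((n : ℝ) ^ ((1:ℝ)/((d:ℝ)+1))) • u n}

def FiniteDensity {d : ℕ} (S : Set (EuclideanSpace ℝ (Fin (d+1)))) : Prop :=
  ∃ C > (0:ℝ), ∀ T ≥ (1:ℝ),
    ((S ∩ Metric.closedBall 0 T).ncard : ℝ) ≤ C * T ^ (d+1)

def IsOrchard {d : ℕ} (O : Set (EuclideanSpace ℝ (Fin (d+1)))) (V : ℝ → ℝ) : Prop :=
  FiniteDensity O ∧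
    ∀ ε ∈ Set.Ioo (0:ℝ) 1, ∀ v : EuclideanSpace ℝ (Fin (d+1)), ‖v‖ = 1 →
      ∃ o ∈ O, ∃ t : ℝ, 0 < t ∧ t < V ε ∧ ‖o - t • v‖ ≤ ε


/-! The spiral point `n^{1/(d+1)} • u n` is `ε`-close to `t • v` (unit vectors, `t > 0`) only if
`|n^{1/(d+1)} - t| ≤ ε` and `n^{1/(d+1)} ‖u n - v‖ ≤ 2ε`, and conversely `t = n^{1/(d+1)}` works as
soon as `n^{1/(d+1)} ‖u n - v‖ ≤ ε`. Since chord and arc on the sphere are comparable,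
`‖u - v‖ ≤ gdist u v ≤ (π/2) ‖u - v‖`, the orchard condition at scale `ε` and the approximation
condition at a proportional scale are equivalent, the visibility bound `t < W ε` turning into
`n ≤ K V(ε)^{d+1}` after raising to the power `d + 1`; antitonicity of `V` absorbs the change of
scale. -/

open Real

section SphereGeometry

variable {d : ℕ} {u v : EuclideanSpace ℝ (Fin (d+1))}

lemma gdist_nonneg : 0 ≤ gdist u v := arccos_nonneg _

lemma gdist_le_pi : gdist u v ≤ π := arccos_le_pi _

lemma cos_gdist (hu : ‖u‖ = 1) (hv : ‖v‖ = 1) : cos (gdist u v) = inner ℝ u v := by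
  have h := abs_real_inner_le_norm u v
  rw [hu, hv, one_mul] at h
  exact cos_arccos (abs_le.mp h).1 (abs_le.mp h).2

lemma norm_sub_eq_two_mul_sin_half_gdist (hu : ‖u‖ = 1) (hv : ‖v‖ = 1) :
    ‖u - v‖ = 2 * sin (gdist u v / 2) := by
  have hsin : 0 ≤ sin (gdist u v / 2) :=
    sin_nonneg_of_nonneg_of_le_pi (by linarith [gdist_nonneg (u := u) (v := v)])
      (by linarith [gdist_le_pi (u := u) (v := v), pi_pos])
  refine (sq_eq_sq₀ (norm_nonneg _) (by positivity)).mp ?_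
  rw [norm_sub_sq_real, hu, hv, mul_pow, sin_sq_eq_half_sub, mul_div_cancel₀ _ two_ne_zero,
    cos_gdist hu hv]
  ring

lemma norm_sub_le_gdist (hu : ‖u‖ = 1) (hv : ‖v‖ = 1) : ‖u - v‖ ≤ gdist u v := by
  rw [norm_sub_eq_two_mul_sin_half_gdist hu hv]
  linarith [sin_le (div_nonneg gdist_nonneg zero_le_two : 0 ≤ gdist u v / 2)]

lemma gdist_le_pi_div_two_mul_norm_sub (hu : ‖u‖ = 1) (hv : ‖v‖ = 1) :
    gdist u v ≤ π / 2 * ‖u - v‖ := by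
  rw [norm_sub_eq_two_mul_sin_half_gdist hu hv]
  have hJordan := mul_le_sin (div_nonneg gdist_nonneg zero_le_two : 0 ≤ gdist u v / 2)
    (by linarith [gdist_le_pi (u := u) (v := v), pi_pos])
  have hπ := pi_pos
  calc gdist u v = π / 2 * (2 * (2 / π * (gdist u v / 2))) := by field_simp
    _ ≤ π / 2 * (2 * sin (gdist u v / 2)) := by gcongr

end SphereGeometry

section Rays

variable {E : Type*} [NormedAddCommGroup E] [NormedSpace ℝ E] {w v : E} {r t : ℝ}

lemma abs_sub_le_norm_smul_sub_smul (hw : ‖w‖ = 1) (hv : ‖v‖ = 1) (hr : 0 ≤ r) (ht : 0 ≤ t) :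
    |r - t| ≤ ‖r • w - t • v‖ := by
  simpa [norm_smul, hw, hv, abs_of_nonneg hr, abs_of_nonneg ht]
    using abs_norm_sub_norm_le (r • w) (t • v)

lemma mul_norm_sub_le_two_mul_norm_smul_sub_smul (hw : ‖w‖ = 1) (hv : ‖v‖ = 1) (hr : 0 ≤ r)
    (ht : 0 ≤ t) : r * ‖w - v‖ ≤ 2 * ‖r • w - t • v‖ := by
  have hrt := abs_sub_le_norm_smul_sub_smul hw hv hr ht
  calc r * ‖w - v‖ = ‖(r • w - t • v) + (t - r) • v‖ := by
        rw [← norm_smul_of_nonneg hr, smul_sub, sub_smul]; congr 1; abel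
    _ ≤ ‖r • w - t • v‖ + |r - t| := by
        grw [norm_add_le, norm_smul, hv, Real.norm_eq_abs, abs_sub_comm, mul_one]
    _ ≤ 2 * ‖r • w - t • v‖ := by linarith

end Rays

lemma rpow_one_div_succ_pow (d : ℕ) {x : ℝ} (hx : 0 ≤ x) :
    (x ^ ((1:ℝ)/((d:ℝ)+1))) ^ (d+1) = x := by
  have h : (1:ℝ)/((d:ℝ)+1) = ((d+1 : ℕ) : ℝ)⁻¹ := by push_cast; rw [one_div]
  rw [h, rpow_inv_natCast_pow hx d.succ_ne_zero]

def ApproximatesSphereAtRate {d : ℕ} (u : ℕ → EuclideanSpace ℝ (Fin (d+1))) (V : ℝ → ℝ) :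
    Prop :=
  ∃ κ > (0:ℝ), ∃ K > (0:ℝ), ∃ ε₀ > (0:ℝ), ∀ ε : ℝ, 0 < ε → ε < ε₀ →
    ∀ v : EuclideanSpace ℝ (Fin (d+1)), ‖v‖ = 1 →
      ∃ n : ℕ, 1 ≤ n ∧ (n : ℝ) ≤ K * (V ε) ^ (d+1) ∧
        gdist (u n) v ≤ κ * ε / (n : ℝ) ^ ((1:ℝ)/((d:ℝ)+1))

section Spiral

variable {d : ℕ} {u : ℕ → EuclideanSpace ℝ (Fin (d+1))}

lemma spiral_finiteDensity (hu : ∀ n, ‖u n‖ = 1) : FiniteDensity (spiral u) := by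
  refine ⟨1, one_pos, fun T _ => ?_⟩
  set N := ⌊T ^ (d+1)⌋₊
  let f : ℕ → EuclideanSpace ℝ (Fin (d+1)) := fun n => ((n : ℝ) ^ ((1:ℝ)/((d:ℝ)+1))) • u n
  have hsub : spiral u ∩ Metric.closedBall 0 T ⊆ f '' Set.Icc 1 N := by
    rintro _ ⟨⟨n, hn, rfl⟩, hball⟩
    have hr : 0 ≤ (n : ℝ) ^ ((1:ℝ)/((d:ℝ)+1)) := by positivity
    rw [mem_closedBall_zero_iff, norm_smul_of_nonneg hr, hu, mul_one] at hball
    refine ⟨n, ⟨hn, Nat.le_floor ?_⟩, rfl⟩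
    rw [← rpow_one_div_succ_pow d n.cast_nonneg]
    gcongr
  have hcard : (spiral u ∩ Metric.closedBall 0 T).ncard ≤ N :=
    calc (spiral u ∩ Metric.closedBall 0 T).ncard ≤ (f '' Set.Icc 1 N).ncard :=
          Set.ncard_le_ncard hsub ((Set.finite_Icc 1 N).image f)
      _ ≤ (Set.Icc 1 N).ncard := Set.ncard_image_le (Set.finite_Icc 1 N)
      _ = N := by rw [Set.ncard_Icc_nat, Nat.add_sub_cancel]
  calc ((spiral u ∩ Metric.closedBall 0 T).ncard : ℝ) ≤ N := by exact_mod_cast hcard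
    _ ≤ 1 * T ^ (d+1) := by rw [one_mul]; exact Nat.floor_le (by positivity)

lemma IsOrchard.exists_spiral_index {W : ℝ → ℝ} (hu : ∀ n, ‖u n‖ = 1)
    (hO : IsOrchard (spiral u) W) {η : ℝ} (hη : η ∈ Set.Ioo (0:ℝ) 1)
    {v : EuclideanSpace ℝ (Fin (d+1))} (hv : ‖v‖ = 1) :
    ∃ n : ℕ, 1 ≤ n ∧ (n : ℝ) ^ ((1:ℝ)/((d:ℝ)+1)) < W η + η ∧
      (n : ℝ) ^ ((1:ℝ)/((d:ℝ)+1)) * ‖u n - v‖ ≤ 2 * η := by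
  obtain ⟨_, ⟨n, hn, rfl⟩, t, ht, htW, hclose⟩ := hO.2 η hη v hv
  have hr : 0 ≤ (n : ℝ) ^ ((1:ℝ)/((d:ℝ)+1)) := by positivity
  refine ⟨n, hn, ?_, ?_⟩
  · linarith [le_abs_self ((n : ℝ) ^ ((1:ℝ)/((d:ℝ)+1)) - t),
      abs_sub_le_norm_smul_sub_smul (hu n) hv hr ht.le]
  · linarith [mul_norm_sub_le_two_mul_norm_smul_sub_smul (hu n) hv hr ht.le]


lemma ApproximatesSphereAtRate.of_isOrchard_spiral {V : ℝ → ℝ} {c κ : ℝ}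
    (hu : ∀ n, ‖u n‖ = 1) (hVpos : ∀ ε ∈ Set.Ioo (0:ℝ) 1, 0 < V ε)
    (hV : AntitoneOn V (Set.Ioo (0:ℝ) 1)) (hc : 0 ≤ c) (hκ : 0 < κ)
    (hO : IsOrchard (spiral u) (fun ε => c * V (κ * ε))) :
    ApproximatesSphereAtRate u V := by
  set m := min κ 1
  have hm : 0 < m := lt_min hκ one_pos
  obtain ⟨ε₀, hε₀, hε₀m, hε₀κ⟩ : ∃ ε₀ > 0, ε₀ < m ∧ ε₀ < m / κ :=
    ⟨min m (m / κ) / 2, by positivity, by linarith [min_le_left m (m / κ)],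
      by linarith [min_le_right m (m / κ), div_pos hm hκ]⟩
  have hε₀1 : ε₀ ∈ Set.Ioo (0:ℝ) 1 := ⟨hε₀, hε₀m.trans_le (min_le_right κ 1)⟩
  have hVε₀ := hVpos ε₀ hε₀1
  refine ⟨π / m, by positivity, (c + 1 / V ε₀) ^ (d+1), by positivity, ε₀, hε₀, ?_⟩
  intro ε hε hεε₀ v hv
  have hε1 : ε ∈ Set.Ioo (0:ℝ) 1 := ⟨hε, hεε₀.trans hε₀1.2⟩
  -- Looking at scale `ε / m` keeps the visibility `c * V (κ * (ε / m))` below `c * V ε`.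
  have hη : ε / m ∈ Set.Ioo (0:ℝ) 1 := ⟨by positivity, (div_lt_one hm).2 (by linarith)⟩
  have hκη : κ * (ε / m) ∈ Set.Ioo (0:ℝ) 1 :=
    ⟨by positivity, by rw [mul_div_assoc', div_lt_one hm, ← lt_div_iff₀' hκ]; linarith⟩
  have hεκη : ε ≤ κ * (ε / m) := by
    rw [mul_div_assoc', le_div_iff₀ hm]; nlinarith [min_le_left κ 1]
  obtain ⟨n, hn, hr_lt, hr_dist⟩ := hO.exists_spiral_index hu hη hv
  set r := (n : ℝ) ^ ((1:ℝ)/((d:ℝ)+1))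
  have hr : 0 < r := by positivity
  have hrV : r ≤ (c + 1 / V ε₀) * V ε :=
    calc r ≤ c * V ε + 1 := by
          linarith [mul_le_mul_of_nonneg_left (hV hε1 hκη hεκη) hc, hη.2]
      _ ≤ c * V ε + 1 / V ε₀ * V ε := by
          rw [one_div_mul_eq_div]
          exact add_le_add_right ((one_le_div hVε₀).2 (hV hε1 hε₀1 hεε₀.le)) _
      _ = (c + 1 / V ε₀) * V ε := by ring
  refine ⟨n, hn, ?_, ?_⟩
  · calc (n : ℝ) = r ^ (d+1) := (rpow_one_div_succ_pow d n.cast_nonneg).symm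
      _ ≤ ((c + 1 / V ε₀) * V ε) ^ (d+1) := by gcongr
      _ = (c + 1 / V ε₀) ^ (d+1) * V ε ^ (d+1) := mul_pow _ _ _
  · calc gdist (u n) v ≤ π / 2 * ‖u n - v‖ := gdist_le_pi_div_two_mul_norm_sub (hu n) hv
      _ ≤ π / 2 * (2 * (ε / m) / r) := by gcongr; rw [le_div_iff₀ hr]; linarith
      _ = π / m * ε / r := by field_simp

lemma ApproximatesSphereAtRate.exists_isOrchard_spiral {V : ℝ → ℝ} (hu : ∀ n, ‖u n‖ = 1)
    (hVpos : ∀ ε ∈ Set.Ioo (0:ℝ) 1, 0 < V ε) (h : ApproximatesSphereAtRate u V) :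
    ∃ c : ℝ, 1 ≤ c ∧ ∃ δ > (0:ℝ), IsOrchard (spiral u) (fun ε => c * V (δ * ε)) := by
  obtain ⟨κ, hκ, K, hK, ε₀, hε₀, happrox⟩ := h
  obtain ⟨δ, hδ, hδε₀, hδ1, hκδ⟩ : ∃ δ > 0, δ ≤ ε₀ ∧ δ ≤ 1 ∧ κ * δ ≤ 1 :=
    ⟨min (min ε₀ 1) κ⁻¹, by positivity, (min_le_left _ _).trans (min_le_left _ _),
      (min_le_left _ _).trans (min_le_right _ _),
      (mul_le_mul_of_nonneg_left (min_le_right _ _) hκ.le).trans_eq (mul_inv_cancel₀ hκ.ne')⟩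
  refine ⟨K + 1, by linarith, δ, hδ, spiral_finiteDensity hu, fun ε hε v hv => ?_⟩
  have hδε : δ * ε < δ := mul_lt_of_lt_one_right hδ hε.2
  have hδε1 : δ * ε ∈ Set.Ioo (0:ℝ) 1 := ⟨mul_pos hδ hε.1, hδε.trans_le hδ1⟩
  obtain ⟨n, hn, hnK, hdist⟩ := happrox (δ * ε) hδε1.1 (hδε.trans_le hδε₀) v hv
  set r := (n : ℝ) ^ ((1:ℝ)/((d:ℝ)+1))
  have hr : 0 < r := by positivity
  have hV := hVpos _ hδε1
  refine ⟨r • u n, ⟨n, hn, rfl⟩, r, hr, ?_, ?_⟩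
  · refine lt_of_pow_lt_pow_left₀ (d+1) (by positivity) ?_
    calc r ^ (d+1) = n := rpow_one_div_succ_pow d n.cast_nonneg
      _ ≤ K * V (δ * ε) ^ (d+1) := hnK
      _ < (K + 1) ^ (d+1) * V (δ * ε) ^ (d+1) := by
          gcongr
          exact (lt_add_one K).trans_le (le_self_pow₀ (by linarith) d.succ_ne_zero)
      _ = ((K + 1) * V (δ * ε)) ^ (d+1) := (mul_pow _ _ _).symm
  · calc ‖r • u n - r • v‖ = r * ‖u n - v‖ := by rw [← smul_sub, norm_smul_of_nonneg hr.le]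
      _ ≤ r * gdist (u n) v := by gcongr; exact norm_sub_le_gdist (hu n) hv
      _ ≤ κ * (δ * ε) := by rwa [le_div_iff₀' hr] at hdist
      _ ≤ ε := by nlinarith [hε.1]

end Spiral

theorem spiral_orchard_iff_general (d : ℕ)
    (u : ℕ → EuclideanSpace ℝ (Fin (d+1))) (hu : ∀ n, ‖u n‖ = 1)
    (V : ℝ → ℝ) (hVpos : ∀ ε ∈ Set.Ioo (0:ℝ) 1, 0 < V ε)
    (hV : AntitoneOn V (Set.Ioo (0:ℝ) 1)) :
    (∃ cU : ℝ, 1 ≤ cU ∧ ∃ κU > (0:ℝ),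
        IsOrchard (spiral u) (fun ε => cU * V (κU * ε))) ↔
    (∃ κ > (0:ℝ), ∃ K > (0:ℝ), ∃ ε₀ > (0:ℝ), ∀ ε : ℝ, 0 < ε → ε < ε₀ →
        ∀ v : EuclideanSpace ℝ (Fin (d+1)), ‖v‖ = 1 →
          ∃ n : ℕ, 1 ≤ n ∧ (n : ℝ) ≤ K * (V ε) ^ (d+1) ∧
            gdist (u n) v ≤ κ * ε / (n : ℝ) ^ ((1:ℝ)/((d:ℝ)+1))) := by
  constructor
  · rintro ⟨cU, hcU, κU, hκU, hO⟩
    exact ApproximatesSphereAtRate.of_isOrchard_spiral hu hVpos hV (by linarith) hκU hO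
  · exact ApproximatesSphereAtRate.exists_isOrchard_spiral hu hVpos

/-- Point (1) of the main theorem: a spiral is an orchard with visibility
`ε ↦ c_U · V(κ_U · ε)` iff directions on the sphere are approximated at the
appropriate rate by an initial segment of the sequence. -/
theorem spiral_orchard_iff (d : ℕ) (hd : 1 ≤ d)
    (u : ℕ → EuclideanSpace ℝ (Fin (d+1))) (hu : ∀ n, ‖u n‖ = 1)
    (V : ℝ → ℝ) (hVpos : ∀ ε ∈ Set.Ioo (0:ℝ) 1, 0 < V ε)
    (hV : AntitoneOn V (Set.Ioo (0:ℝ) 1)) :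
    (∃ cU : ℝ, 1 ≤ cU ∧ ∃ κU > (0:ℝ),
        IsOrchard (spiral u) (fun ε => cU * V (κU * ε))) ↔
    (∃ κ > (0:ℝ), ∃ K > (0:ℝ), ∃ ε₀ > (0:ℝ), ∀ ε : ℝ, 0 < ε → ε < ε₀ →
        ∀ v : EuclideanSpace ℝ (Fin (d+1)), ‖v‖ = 1 →
          ∃ n : ℕ, 1 ≤ n ∧ (n : ℝ) ≤ K * (V ε) ^ (d+1) ∧
            gdist (u n) v ≤ κ * ε / (n : ℝ) ^ ((1:ℝ)/((d:ℝ)+1))) :=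
  spiral_orchard_iff_general d u hu V hVpos hV
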